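/- arXiv:1809.03898 — 4 statements merged into one kernel-verified Lean document; each statement's English description precedes it below -/
import Mathlib

section
/- For rotation matrices R, R_d ∈ SO(3), define Ψ(R,R_d) = (1/2)tr(I - R_dᵀR) and e_R = (1/2)·S⁻¹(R_dᵀR - RᵀR_d), where S⁻¹ extracts the vector from a skew-symmetric matrix. Then ‖e_R‖² = Ψ(R,R_d)·(2 - Ψ(R,R_d)). -/
open Matrix

noncomputable def enorm3 (v : Fin 3 → ℝ) : ℝ := ‖(WithLp.equiv 2 (Fin 3 → ℝ)).symm v‖

def vee (A : Matrix (Fin 3) (Fin 3) ℝ) : Fin 3 → ℝ := ![A 2 1, A 0 2, A 1 0]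

noncomputable def Psi (R Rd : Matrix (Fin 3) (Fin 3) ℝ) : ℝ :=
  (1 / 2) * Matrix.trace (1 - Rdᵀ * R)

noncomputable def eRvec (R Rd : Matrix (Fin 3) (Fin 3) ℝ) : Fin 3 → ℝ :=
  (1 / 2 : ℝ) • vee (Rdᵀ * R - Rᵀ * Rd)


theorem stmt0 (R Rd : Matrix (Fin 3) (Fin 3) ℝ)
    (hR : Rᵀ * R = 1) (hRdet : R.det = 1)
    (hRd : Rdᵀ * Rd = 1) (hRddet : Rd.det = 1) :
    (enorm3 (eRvec R Rd)) ^ 2 = Psi R Rd * (2 - Psi R Rd) := by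
  set Q := Rdᵀ * R with hQdef
  have hRd' : Rd * Rdᵀ = 1 := mul_eq_one_comm.mp hRd
  have hQT : Qᵀ = Rᵀ * Rd := by simp [hQdef]
  have hQo : Qᵀ * Q = 1 := by
    rw [hQT, hQdef, Matrix.mul_assoc, ← Matrix.mul_assoc Rd, hRd', Matrix.one_mul, hR]
  have hQo2 : Q * Qᵀ = 1 := mul_eq_one_comm.mp hQo
  have hdet : Q.det = 1 := by
    simp [hQdef, Matrix.det_mul, Matrix.det_transpose, hRdet, hRddet]
  have hadj : Qᵀ = Q.adjugate := by
    have h1 : Q * Q.adjugate = 1 := by rw [Matrix.mul_adjugate, hdet, one_smul]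
    have h2 := congrArg (fun M => Qᵀ * M) h1
    simp only [← Matrix.mul_assoc, hQo, Matrix.one_mul, Matrix.mul_one] at h2
    exact h2.symm
  -- entry equations
  have hadj' := hadj
  rw [Matrix.adjugate_fin_three] at hadj'
  have h00 : Q 0 0 = Q 1 1 * Q 2 2 - Q 1 2 * Q 2 1 := by
    have := congrFun (congrFun hadj' 0) 0; simpa using this
  have h11 : Q 1 1 = Q 0 0 * Q 2 2 - Q 0 2 * Q 2 0 := by
    have := congrFun (congrFun hadj' 1) 1; simpa using this
  have h22 : Q 2 2 = Q 0 0 * Q 1 1 - Q 0 1 * Q 1 0 := by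
    have := congrFun (congrFun hadj' 2) 2; simpa using this
  have hrow : ∀ i, Q i 0 ^ 2 + Q i 1 ^ 2 + Q i 2 ^ 2 = 1 := by
    intro i
    have := congrFun (congrFun hQo2 i) i
    simpa [Matrix.mul_apply, Fin.sum_univ_three, Matrix.one_apply, sq] using this
  have hr0 := hrow 0
  have hr1 := hrow 1
  have hr2 := hrow 2
  -- rewrite the goal in terms of entries
  have hnorm : enorm3 (eRvec R Rd) ^ 2 =
      (eRvec R Rd 0) ^ 2 + (eRvec R Rd 1) ^ 2 + (eRvec R Rd 2) ^ 2 := by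
    rw [enorm3, EuclideanSpace.norm_eq]
    rw [Real.sq_sqrt (by positivity)]
    simp [Fin.sum_univ_three, sq_abs]
  have heR : ∀ i, eRvec R Rd i = (1/2 : ℝ) * vee (Q - Qᵀ) i := by
    intro i; rw [eRvec, hQT]; rfl
  have hPsi : Psi R Rd = (1/2) * (3 - (Q 0 0 + Q 1 1 + Q 2 2)) := by
    rw [Psi, ← hQdef, Matrix.trace_sub, Matrix.trace_one]
    simp [Matrix.trace, Fin.sum_univ_three, Matrix.diag]
  rw [hnorm, heR 0, heR 1, heR 2, hPsi]
  simp only [vee, Matrix.sub_apply, Matrix.transpose_apply, Matrix.cons_val_zero,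
    Matrix.cons_val_one, Matrix.head_cons, Matrix.cons_val_two, Matrix.tail_cons]
  -- now pure algebra
  linear_combination (1/4)*(hr0+hr1+hr2) - (1/2)*(h00+h11+h22)
end

section
/- For rotation matrices R, R_d ∈ SO(3), with Ψ(R,R_d) = (1/2)tr(I - R_dᵀR) and e_R = (1/2)S⁻¹(R_dᵀR - RᵀR_d), the lower bound (1/2)‖e_R‖² ≤ Ψ(R,R_d) holds. -/
open Matrix

lemma enorm3_sq (v : Fin 3 → ℝ) : enorm3 v ^ 2 = v 0 ^ 2 + v 1 ^ 2 + v 2 ^ 2 := by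
  have h : enorm3 v = Real.sqrt (v 0 ^ 2 + v 1 ^ 2 + v 2 ^ 2) := by
    rw [enorm3, EuclideanSpace.norm_eq]
    simp [Fin.sum_univ_three, sq_abs]
  rw [h, Real.sq_sqrt (by positivity)]

set_option maxHeartbeats 1000000 in
theorem stmt2 (R Rd : Matrix (Fin 3) (Fin 3) ℝ)
    (hR : Rᵀ * R = 1) (hRdet : R.det = 1)
    (hRd : Rdᵀ * Rd = 1) (hRddet : Rd.det = 1) :
    (1 / 2) * (enorm3 (eRvec R Rd)) ^ 2 ≤ Psi R Rd := by
  set Q : Matrix (Fin 3) (Fin 3) ℝ := Rdᵀ * R with hQdef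
  have hQ : Qᵀ * Q = 1 := by
    have hRd' : Rd * Rdᵀ = 1 := mul_eq_one_comm.mp hRd
    calc Qᵀ * Q = Rᵀ * (Rd * Rdᵀ) * R := by
          simp [hQdef, Matrix.transpose_mul, Matrix.mul_assoc]
      _ = 1 := by rw [hRd']; simpa using hR
  have hQdet : Q.det = 1 := by
    simp [hQdef, Matrix.det_mul, Matrix.det_transpose, hRdet, hRddet]
  have hQ' : Q * Qᵀ = 1 := mul_eq_one_comm.mp hQ
  have hinv : Q⁻¹ = Qᵀ := inv_eq_right_inv hQ'
  have hadj : Q.adjugate = Qᵀ := by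
    rw [← hinv, Matrix.inv_def, hQdet]; simp
  -- cofactor equations
  have hc0 : Q 0 0 = Q 1 1 * Q 2 2 - Q 1 2 * Q 2 1 := by
    have := congrFun (congrFun hadj 0) 0
    simp [Matrix.adjugate_apply, Matrix.det_fin_three, Matrix.updateRow_apply,
      Pi.single, Function.update] at this
    linarith
  have hc1 : Q 1 1 = Q 0 0 * Q 2 2 - Q 0 2 * Q 2 0 := by
    have := congrFun (congrFun hadj 1) 1
    simp [Matrix.adjugate_apply, Matrix.det_fin_three, Matrix.updateRow_apply,
      Pi.single, Function.update] at this
    linarith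
  have hc2 : Q 2 2 = Q 0 0 * Q 1 1 - Q 0 1 * Q 1 0 := by
    have := congrFun (congrFun hadj 2) 2
    simp [Matrix.adjugate_apply, Matrix.det_fin_three, Matrix.updateRow_apply,
      Pi.single, Function.update] at this
    linarith
  -- column norm equations
  have h00 : Q 0 0 ^ 2 + Q 1 0 ^ 2 + Q 2 0 ^ 2 = 1 := by
    have := congrFun (congrFun hQ 0) 0
    simp [Matrix.mul_apply, Fin.sum_univ_three, Matrix.transpose_apply,
      Matrix.one_apply] at this
    nlinarith [this]
  have h11 : Q 0 1 ^ 2 + Q 1 1 ^ 2 + Q 2 1 ^ 2 = 1 := by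
    have := congrFun (congrFun hQ 1) 1
    simp [Matrix.mul_apply, Fin.sum_univ_three, Matrix.transpose_apply,
      Matrix.one_apply] at this
    nlinarith [this]
  have h22 : Q 0 2 ^ 2 + Q 1 2 ^ 2 + Q 2 2 ^ 2 = 1 := by
    have := congrFun (congrFun hQ 2) 2
    simp [Matrix.mul_apply, Fin.sum_univ_three, Matrix.transpose_apply,
      Matrix.one_apply] at this
    nlinarith [this]
  -- rewrite goal in terms of entries of Q
  have hPsi : Psi R Rd = (1 / 2) * (3 - (Q 0 0 + Q 1 1 + Q 2 2)) := by
    simp [Psi, Matrix.trace, Matrix.diag, Fin.sum_univ_three, ← hQdef,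
      Matrix.sub_apply, Matrix.one_apply]
  have hT : Rᵀ * Rd = Qᵀ := by
    rw [hQdef, Matrix.transpose_mul, Matrix.transpose_transpose]
  have he : eRvec R Rd = (1 / 2 : ℝ) • ![Q 2 1 - Q 1 2, Q 0 2 - Q 2 0, Q 1 0 - Q 0 1] := by
    rw [eRvec, hT, ← hQdef]
    congr 1
  rw [hPsi, he, enorm3_sq]
  simp only [Pi.smul_apply, Matrix.cons_val_zero, Matrix.cons_val_one, Matrix.head_cons,
    Matrix.cons_val_two, Matrix.tail_cons, smul_eq_mul]
  have hid : (Q 2 1 - Q 1 2) ^ 2 + (Q 0 2 - Q 2 0) ^ 2 + (Q 1 0 - Q 0 1) ^ 2 =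
      (3 - (Q 0 0 + Q 1 1 + Q 2 2)) * (1 + (Q 0 0 + Q 1 1 + Q 2 2)) := by
    linear_combination h00 + h11 + h22 - 2 * hc0 - 2 * hc1 - 2 * hc2
  nlinarith [hid, sq_nonneg (3 - (Q 0 0 + Q 1 1 + Q 2 2))]
end

section
/- For R, R_d ∈ SO(3), the matrix E(R,R_d) = (1/2)(tr(RᵀR_d)·I - RᵀR_d) has operator norm at most 1. -/
/-!
Put `Q = Rᵀ R_d ∈ SO(3)` and `t = tr Q`. As `Q` is orthogonal,
`‖(t I - Q) v‖² = (t² + 1)‖v‖² - 2t ⟪v, Q v⟫`, so the claim follows from `-1 ≤ t ≤ 3` and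
`(t - 1)‖v‖² ≤ 2⟪v, Q v⟫ ≤ 2‖v‖²`. The upper bounds hold for every orthogonal `Q`. For the lower
ones, Cayley–Hamilton with `adj Q = Qᵀ` shows that the symmetric matrix
`M = Q + Qᵀ + (1 - t) I` satisfies `Q M = M`, hence `M² = (3 - t) M`, so `M` is positive
semidefinite. Moreover `M` is singular (otherwise `Q = I`, and then `M = 0`), and a null vector
of `M` forces `t ≥ -1`.
-/

open Matrix

namespace Matrix

section Orthogonal

variable {n : Type*} [Fintype n]

lemma mulVec_dotProduct_mulVec_self (A : Matrix n n ℝ) (v : n → ℝ) :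
    A *ᵥ v ⬝ᵥ A *ᵥ v = v ⬝ᵥ (Aᵀ * A) *ᵥ v := by
  rw [dotProduct_comm v, ← mulVec_mulVec, mulVec_transpose, ← dotProduct_mulVec]

variable [DecidableEq n]

lemma norm_toEuclideanCLM_le_one {A : Matrix n n ℝ}
    (h : ∀ v, A *ᵥ v ⬝ᵥ A *ᵥ v ≤ v ⬝ᵥ v) : ‖toEuclideanCLM (𝕜 := ℝ) A‖ ≤ 1 := by
  refine ContinuousLinearMap.opNorm_le_bound _ zero_le_one fun x => ?_
  have hsq : ‖toEuclideanCLM (𝕜 := ℝ) A x‖ ^ 2 ≤ ‖x‖ ^ 2 := by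
    simpa only [← real_inner_self_eq_norm_sq, EuclideanSpace.inner_eq_star_dotProduct,
      ofLp_toEuclideanCLM, star_trivial] using h (WithLp.ofLp x)
  rw [one_mul]
  exact (pow_le_pow_iff_left₀ (norm_nonneg _) (norm_nonneg _) two_ne_zero).mp hsq

variable {Q : Matrix n n ℝ}

lemma mulVec_dotProduct_mulVec_of_transpose_mul_self (hQ : Qᵀ * Q = 1) (v : n → ℝ) :
    Q *ᵥ v ⬝ᵥ Q *ᵥ v = v ⬝ᵥ v := by
  rw [mulVec_dotProduct_mulVec_self, hQ, one_mulVec]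

lemma dotProduct_mulVec_le_of_transpose_mul_self (hQ : Qᵀ * Q = 1) (v : n → ℝ) :
    v ⬝ᵥ Q *ᵥ v ≤ v ⬝ᵥ v := by
  have h := dotProduct_self_star_nonneg (v - Q *ᵥ v)
  simp only [star_trivial, sub_dotProduct, dotProduct_sub,
    mulVec_dotProduct_mulVec_of_transpose_mul_self hQ, dotProduct_comm (Q *ᵥ v) v] at h
  linarith

lemma neg_le_dotProduct_mulVec_of_transpose_mul_self (hQ : Qᵀ * Q = 1) (v : n → ℝ) :
    -(v ⬝ᵥ v) ≤ v ⬝ᵥ Q *ᵥ v := by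
  have h := dotProduct_self_star_nonneg (v + Q *ᵥ v)
  simp only [star_trivial, add_dotProduct, dotProduct_add,
    mulVec_dotProduct_mulVec_of_transpose_mul_self hQ, dotProduct_comm (Q *ᵥ v) v] at h
  linarith

lemma trace_le_card_of_transpose_mul_self (hQ : Qᵀ * Q = 1) :
    Q.trace ≤ Fintype.card n := by
  have hdiag (i : n) : Q i i ≤ 1 := by
    simpa [mulVec_single_one] using dotProduct_mulVec_le_of_transpose_mul_self hQ (Pi.single i 1)
  calc Q.trace = ∑ i, Q i i := rfl
    _ ≤ ∑ _i : n, 1 := Finset.sum_le_sum fun i _ => hdiag i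
    _ = Fintype.card n := by simp

lemma adjugate_eq_transpose_of_transpose_mul_self (hQ : Qᵀ * Q = 1)
    (hdet : Q.det = 1) : adjugate Q = Qᵀ := by
  calc adjugate Q = Qᵀ * (Q * adjugate Q) := by rw [← mul_assoc, hQ, one_mul]
    _ = Qᵀ := by rw [mul_adjugate, hdet, one_smul, mul_one]

end Orthogonal

section SpecialOrthogonalFinThree

lemma mul_self_sub_trace_smul_add_trace_adjugate_smul_one {R : Type*} [CommRing R]
    (A : Matrix (Fin 3) (Fin 3) R) :
    A * A - A.trace • A + A.adjugate.trace • 1 = A.adjugate := by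
  ext i j
  fin_cases i <;> fin_cases j <;>
    simp [mul_apply, adjugate_fin_three, trace_fin_three, Fin.sum_univ_three] <;> ring

variable {Q : Matrix (Fin 3) (Fin 3) ℝ}

lemma transpose_eq_of_det_eq_one (hQ : Qᵀ * Q = 1) (hdet : Q.det = 1) :
    Qᵀ = Q * Q - Q.trace • Q + Q.trace • 1 := by
  have hadj := adjugate_eq_transpose_of_transpose_mul_self hQ hdet
  rw [← hadj, ← mul_self_sub_trace_smul_add_trace_adjugate_smul_one, hadj, trace_transpose]

/-- For a rotation by `θ` about the unit axis `u` this is `2 (1 - cos θ) u uᵀ`. -/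
def axisForm (Q : Matrix (Fin 3) (Fin 3) ℝ) : Matrix (Fin 3) (Fin 3) ℝ :=
  Q + Qᵀ + (1 - Q.trace) • 1

lemma axisForm_transpose (Q : Matrix (Fin 3) (Fin 3) ℝ) : (axisForm Q)ᵀ = axisForm Q := by
  simp only [axisForm, transpose_add, transpose_smul, transpose_one, transpose_transpose]
  abel

lemma mul_axisForm (hQ : Qᵀ * Q = 1) (hdet : Q.det = 1) : Q * axisForm Q = axisForm Q := by
  have hQ' : Q * Qᵀ = 1 := mul_eq_one_comm.mp hQ
  have hCH := transpose_eq_of_det_eq_one hQ hdet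
  simp only [axisForm, mul_add, mul_smul_comm, mul_one, hQ']
  rw [hCH]
  module

lemma axisForm_mul_self (hQ : Qᵀ * Q = 1) (hdet : Q.det = 1) :
    axisForm Q * axisForm Q = (3 - Q.trace) • axisForm Q := by
  have hleft : Qᵀ * axisForm Q = axisForm Q := by
    rw [← mul_axisForm hQ hdet, ← mul_assoc, hQ, one_mul, mul_axisForm hQ hdet]
  have hright : axisForm Q * Q = axisForm Q := by
    simpa only [transpose_mul, transpose_transpose, axisForm_transpose] using
      congrArg transpose hleft
  have hright' : axisForm Q * Qᵀ = axisForm Q := by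
    simpa only [transpose_mul, axisForm_transpose] using congrArg transpose (mul_axisForm hQ hdet)
  calc axisForm Q * axisForm Q
        = axisForm Q * Q + axisForm Q * Qᵀ + (1 - Q.trace) • axisForm Q := by
          nth_rw 2 [axisForm]
          rw [mul_add, mul_add, mul_smul_comm, mul_one]
    _ = (3 - Q.trace) • axisForm Q := by
          rw [hright, hright']
          module

lemma det_axisForm (hQ : Qᵀ * Q = 1) (hdet : Q.det = 1) : (axisForm Q).det = 0 := by
  by_contra hne
  have hQ1 : Q = 1 := by
    have h := congrArg (· * (axisForm Q)⁻¹) (mul_axisForm hQ hdet)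
    simpa [mul_assoc, mul_nonsing_inv _ (isUnit_iff_ne_zero.mpr hne)] using h
  have hzero : axisForm Q = 0 := by
    rw [hQ1, axisForm, transpose_one, trace_one, Fintype.card_fin]
    module
  simp [hzero] at hne

lemma dotProduct_mulVec_axisForm (Q : Matrix (Fin 3) (Fin 3) ℝ) (v : Fin 3 → ℝ) :
    v ⬝ᵥ axisForm Q *ᵥ v = 2 * (v ⬝ᵥ Q *ᵥ v) + (1 - Q.trace) * (v ⬝ᵥ v) := by
  rw [axisForm, add_mulVec, add_mulVec, smul_mulVec, one_mulVec, dotProduct_add, dotProduct_add,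
    dotProduct_smul, mulVec_transpose, dotProduct_comm v (v ᵥ* Q), ← dotProduct_mulVec,
    smul_eq_mul]
  ring

lemma trace_le_three (hQ : Qᵀ * Q = 1) : Q.trace ≤ 3 := by
  simpa using trace_le_card_of_transpose_mul_self hQ

lemma dotProduct_mulVec_axisForm_nonneg (hQ : Qᵀ * Q = 1) (hdet : Q.det = 1) (v : Fin 3 → ℝ) :
    0 ≤ v ⬝ᵥ axisForm Q *ᵥ v := by
  have key : (3 - Q.trace) * (v ⬝ᵥ axisForm Q *ᵥ v) = axisForm Q *ᵥ v ⬝ᵥ axisForm Q *ᵥ v := by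
    rw [mulVec_dotProduct_mulVec_self, axisForm_transpose, axisForm_mul_self hQ hdet,
      smul_mulVec, dotProduct_smul, smul_eq_mul]
  rcases (trace_le_three hQ).lt_or_eq with hlt | heq
  · refine (mul_nonneg_iff_of_pos_left (sub_pos.mpr hlt)).mp ?_
    rw [key]
    simpa only [star_trivial] using dotProduct_self_star_nonneg (axisForm Q *ᵥ v)
  · rw [heq, sub_self, zero_mul, eq_comm, dotProduct_self_eq_zero] at key
    rw [key, dotProduct_zero]

lemma trace_sub_one_mul_le (hQ : Qᵀ * Q = 1) (hdet : Q.det = 1) (v : Fin 3 → ℝ) :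
    (Q.trace - 1) * (v ⬝ᵥ v) ≤ 2 * (v ⬝ᵥ Q *ᵥ v) := by
  have h := dotProduct_mulVec_axisForm_nonneg hQ hdet v
  rw [dotProduct_mulVec_axisForm] at h
  linarith

lemma neg_one_le_trace (hQ : Qᵀ * Q = 1) (hdet : Q.det = 1) : -1 ≤ Q.trace := by
  obtain ⟨v, hv, hMv⟩ := exists_mulVec_eq_zero_iff.mpr (det_axisForm hQ hdet)
  have hpos : 0 < v ⬝ᵥ v := by simpa only [star_trivial] using dotProduct_self_star_pos_iff.mpr hv
  have h0 := dotProduct_mulVec_axisForm Q v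
  rw [hMv, dotProduct_zero] at h0
  have hge := neg_le_dotProduct_mulVec_of_transpose_mul_self hQ v
  exact le_of_mul_le_mul_right (by linarith) hpos

/-- The paper's `E(R, R_d)` is `errorMatrix (Rᵀ * R_d)`. -/
noncomputable def errorMatrix (Q : Matrix (Fin 3) (Fin 3) ℝ) : Matrix (Fin 3) (Fin 3) ℝ :=
  (1 / 2 : ℝ) • (Q.trace • 1 - Q)

lemma errorMatrix_mulVec_dotProduct_le (hQ : Qᵀ * Q = 1) (hdet : Q.det = 1) (v : Fin 3 → ℝ) :
    errorMatrix Q *ᵥ v ⬝ᵥ errorMatrix Q *ᵥ v ≤ v ⬝ᵥ v := by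
  have hexpand : errorMatrix Q *ᵥ v ⬝ᵥ errorMatrix Q *ᵥ v
      = ((Q.trace ^ 2 + 1) * (v ⬝ᵥ v) - 2 * Q.trace * (v ⬝ᵥ Q *ᵥ v)) / 4 := by
    simp only [errorMatrix, smul_mulVec, sub_mulVec, one_mulVec, smul_dotProduct, dotProduct_smul,
      sub_dotProduct, dotProduct_sub, mulVec_dotProduct_mulVec_of_transpose_mul_self hQ,
      dotProduct_comm (Q *ᵥ v) v, smul_eq_mul]
    ring
  have hn : 0 ≤ v ⬝ᵥ v := by simpa only [star_trivial] using dotProduct_self_star_nonneg v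
  have hup := dotProduct_mulVec_le_of_transpose_mul_self hQ v
  have hlow := trace_sub_one_mul_le hQ hdet v
  have ht3 := trace_le_three hQ
  have ht1 := neg_one_le_trace hQ hdet
  rw [hexpand, div_le_iff₀ four_pos]
  -- with `t = tr Q`, `n = v ⬝ᵥ v`, `a = v ⬝ᵥ Q *ᵥ v`, the slack `(3 - t²) n + 2 t a` equals
  -- `t (2 a - (t - 1) n) + (3 - t) n` and `(3 - t) (1 + t) n + 2 (-t) (n - a)`
  rcases le_total 0 Q.trace with ht | ht
  · nlinarith [mul_nonneg ht (sub_nonneg.mpr hlow), mul_nonneg (sub_nonneg.mpr ht3) hn]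
  · nlinarith [mul_nonneg (mul_nonneg (sub_nonneg.mpr ht3) (neg_le_iff_add_nonneg.mp ht1)) hn,
      mul_nonneg (neg_nonneg.mpr ht) (sub_nonneg.mpr hup)]

end SpecialOrthogonalFinThree

end Matrix

theorem stmt7 (R Rd : Matrix (Fin 3) (Fin 3) ℝ)
    (hR : Rᵀ * R = 1) (hRdet : R.det = 1)
    (hRd : Rdᵀ * Rd = 1) (hRddet : Rd.det = 1) :
    ‖Matrix.toEuclideanCLM (𝕜 := ℝ)
      ((1 / 2 : ℝ) • (Matrix.trace (Rᵀ * Rd) • (1 : Matrix (Fin 3) (Fin 3) ℝ) - Rᵀ * Rd))‖ ≤ 1 := by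
  have hQ : (Rᵀ * Rd)ᵀ * (Rᵀ * Rd) = 1 := by
    rw [transpose_mul, transpose_transpose, mul_assoc, ← mul_assoc R, mul_eq_one_comm.mp hR,
      one_mul, hRd]
  have hdet : (Rᵀ * Rd).det = 1 := by rw [det_mul, det_transpose, hRdet, hRddet, one_mul]
  exact norm_toEuclideanCLM_le_one (errorMatrix_mulVec_dotProduct_le hQ hdet)
end

section
/- Let m, a, k_x, k_v > 0 and θ ∈ (0,1) with θ < a k_v²/(a k_v² + m k_x) and θ < δ₁ + δ₂ where δ₁ = 2k_v²√(4k_x⁴k_v⁴a⁴ + 4k_x⁵k_v²a³m + 2k_x⁶m²a²)/(k_x⁴m²) and δ₂ = -4a²k_v⁴/(m²k_x²) - 2a k_v²/(m k_x). Then the symmetric matrix Π₁ = [[a k_x²(1-θ), -a k_x k_v θ - m k_x²θ/(2k_v)], [-a k_x k_v θ - m k_x²θ/(2k_v), a k_v² - θ(m k_x + a k_v²)]] is positive definite. -/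
/-!
A symmetric `2 × 2` matrix is positive definite as soon as its upper-left entry and its
determinant are positive. For `Π₁` the upper-left entry is positive because `θ < 1`, and
`4 k_v² det Π₁ = k_x² (4 a² k_v⁴ - f θ)` with `f θ = m² k_x² θ² + 4 a k_v² (m k_x + 2 a k_v²) θ`.
The threshold `δ₁ + δ₂` is the positive root of `f θ = 4 a² k_v⁴`, so `f θ < 4 a² k_v⁴`
for `0 < θ < δ₁ + δ₂`.
-/

open Matrix

theorem Matrix.posDef_fin_two_of_pos_of_det_pos {R : Type*} [Field R] [LinearOrder R]
    [IsStrictOrderedRing R] [StarRing R] [TrivialStar R] {a b c : R}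
    (ha : 0 < a) (hdet : 0 < a * c - b ^ 2) :
    (!![a, b; b, c] : Matrix (Fin 2) (Fin 2) R).PosDef := by
  refine posDef_iff_dotProduct_mulVec.mpr ⟨?_, fun x hx => ?_⟩
  · ext i j
    fin_cases i <;> fin_cases j <;> simp
  · have hform : star x ⬝ᵥ (!![a, b; b, c] *ᵥ x)
        = a * x 0 ^ 2 + 2 * b * x 0 * x 1 + c * x 1 ^ 2 := by
      simp [dotProduct, mulVec, Fin.sum_univ_two]
      ring
    have hsq : a * (a * x 0 ^ 2 + 2 * b * x 0 * x 1 + c * x 1 ^ 2)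
        = (a * x 0 + b * x 1) ^ 2 + (a * c - b ^ 2) * x 1 ^ 2 := by ring
    have hpos : 0 < (a * x 0 + b * x 1) ^ 2 + (a * c - b ^ 2) * x 1 ^ 2 := by
      by_cases hx1 : x 1 = 0
      · have hx0 : x 0 ≠ 0 := fun hx0 => hx (by ext i; fin_cases i <;> assumption)
        simp only [hx1, mul_zero, add_zero, zero_pow two_ne_zero]
        positivity
      · positivity
    rw [hform]
    exact pos_of_mul_pos_right (hsq ▸ hpos) ha.le

theorem quadratic_lt_of_abs_lt {R : Type*} [Field R] [LinearOrder R] [IsStrictOrderedRing R]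
    {p q r s x : R} (hp : 0 < p) (hs : s ^ 2 = q ^ 2 + 4 * p * r) (hx : |2 * p * x + q| < s) :
    p * x ^ 2 + q * x < r := by
  have : (2 * p * x + q) ^ 2 < s ^ 2 := sq_lt_sq' (abs_lt.mp hx).1 (abs_lt.mp hx).2
  nlinarith

theorem piOne_det_eq {m a kx kv θ : ℝ} (hkv : kv ≠ 0) :
    a * kx ^ 2 * (1 - θ) * (a * kv ^ 2 - θ * (m * kx + a * kv ^ 2))
      - (-(a * kx * kv * θ) - m * kx ^ 2 * θ / (2 * kv)) ^ 2
      = kx ^ 2 / (4 * kv ^ 2) * (4 * (a * kv ^ 2) ^ 2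
          - ((m * kx) ^ 2 * θ ^ 2 + 4 * a * kv ^ 2 * (m * kx + 2 * a * kv ^ 2) * θ)) := by
  field_simp
  ring

theorem quadratic_lt_of_lt_piOne_bound {m a kx kv θ : ℝ} (hm : 0 < m) (ha : 0 < a) (hkx : 0 < kx)
    (hkv : 0 < kv) (hθ0 : 0 < θ)
    (hθ : θ < 2 * kv ^ 2 * Real.sqrt (4 * kx ^ 4 * kv ^ 4 * a ^ 4 +
            4 * kx ^ 5 * kv ^ 2 * a ^ 3 * m + 2 * kx ^ 6 * m ^ 2 * a ^ 2) / (kx ^ 4 * m ^ 2)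
          + (-(4 * a ^ 2 * kv ^ 4 / (m ^ 2 * kx ^ 2)) - 2 * a * kv ^ 2 / (m * kx))) :
    (m * kx) ^ 2 * θ ^ 2 + 4 * a * kv ^ 2 * (m * kx + 2 * a * kv ^ 2) * θ
      < 4 * (a * kv ^ 2) ^ 2 := by
  set D := 4 * kx ^ 4 * kv ^ 4 * a ^ 4 + 4 * kx ^ 5 * kv ^ 2 * a ^ 3 * m
    + 2 * kx ^ 6 * m ^ 2 * a ^ 2 with hD
  -- the square root of the discriminant is `4 k_v² √D / k_x²`
  apply quadratic_lt_of_abs_lt (s := 4 * kv ^ 2 * √D / kx ^ 2) (by positivity)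
  · rw [div_pow, mul_pow, Real.sq_sqrt (by positivity), hD]
    field_simp
    ring
  · rw [abs_of_pos (by positivity)]
    calc 2 * (m * kx) ^ 2 * θ + 4 * a * kv ^ 2 * (m * kx + 2 * a * kv ^ 2)
        < 2 * (m * kx) ^ 2 * (2 * kv ^ 2 * √D / (kx ^ 4 * m ^ 2)
          + (-(4 * a ^ 2 * kv ^ 4 / (m ^ 2 * kx ^ 2)) - 2 * a * kv ^ 2 / (m * kx)))
          + 4 * a * kv ^ 2 * (m * kx + 2 * a * kv ^ 2) := by gcongr
      _ = 4 * kv ^ 2 * √D / kx ^ 2 := by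
        field_simp
        ring

theorem stmt15_general (m a kx kv θ : ℝ) (hm : 0 < m) (ha : 0 < a) (hkx : 0 < kx) (hkv : 0 < kv)
    (hθ0 : 0 < θ) (hθ1 : θ < 1)
    (hθb : θ < 2 * kv ^ 2 * Real.sqrt (4 * kx ^ 4 * kv ^ 4 * a ^ 4 +
            4 * kx ^ 5 * kv ^ 2 * a ^ 3 * m + 2 * kx ^ 6 * m ^ 2 * a ^ 2) / (kx ^ 4 * m ^ 2)
          + (-(4 * a ^ 2 * kv ^ 4 / (m ^ 2 * kx ^ 2)) - 2 * a * kv ^ 2 / (m * kx))) :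
    (!![a * kx ^ 2 * (1 - θ), -(a * kx * kv * θ) - m * kx ^ 2 * θ / (2 * kv);
        -(a * kx * kv * θ) - m * kx ^ 2 * θ / (2 * kv),
        a * kv ^ 2 - θ * (m * kx + a * kv ^ 2)] : Matrix (Fin 2) (Fin 2) ℝ).PosDef := by
  apply posDef_fin_two_of_pos_of_det_pos
  · have : 0 < 1 - θ := sub_pos.mpr hθ1
    positivity
  · rw [piOne_det_eq hkv.ne']
    have := sub_pos.mpr (quadratic_lt_of_lt_piOne_bound hm ha hkx hkv hθ0 hθb)
    positivity

theorem stmt15 (m a kx kv θ : ℝ) (hm : 0 < m) (ha : 0 < a) (hkx : 0 < kx) (hkv : 0 < kv)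
    (hθ0 : 0 < θ) (hθ1 : θ < 1)
    (hθa : θ < a * kv ^ 2 / (a * kv ^ 2 + m * kx))
    (hθb : θ < 2 * kv ^ 2 * Real.sqrt (4 * kx ^ 4 * kv ^ 4 * a ^ 4 +
            4 * kx ^ 5 * kv ^ 2 * a ^ 3 * m + 2 * kx ^ 6 * m ^ 2 * a ^ 2) / (kx ^ 4 * m ^ 2)
          + (-(4 * a ^ 2 * kv ^ 4 / (m ^ 2 * kx ^ 2)) - 2 * a * kv ^ 2 / (m * kx))) :
    (!![a * kx ^ 2 * (1 - θ), -(a * kx * kv * θ) - m * kx ^ 2 * θ / (2 * kv);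
        -(a * kx * kv * θ) - m * kx ^ 2 * θ / (2 * kv),
        a * kv ^ 2 - θ * (m * kx + a * kv ^ 2)] : Matrix (Fin 2) (Fin 2) ℝ).PosDef :=
  stmt15_general m a kx kv θ hm ha hkx hkv hθ0 hθ1 hθb
end
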